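/- arXiv:2007.07958 — 4 statements merged into one kernel-verified Lean document; each statement's English description precedes it below -/
import Mathlib

section
/- Let ρ₀, ρ₁ be density matrices, t ≥ 0, and let T be any Hermitian matrix with 0 ≤ T ≤ I. Then 1 − tr(ρ₀ T) ≥ tr(ρ₀ · {ρ₀ − t ρ₁ ≤ 0}) + t · (tr(ρ₁ · {ρ₀ − t ρ₁ > 0}) − tr(ρ₁ T)). -/
open ComplexOrder

/-- Orthogonal projection onto the strictly positive eigenspace of a Hermitian matrix. -/
noncomputable def projPos {m : Type*} [Fintype m] [DecidableEq m]
    (A : Matrix m m ℂ) (hA : A.IsHermitian) : Matrix m m ℂ :=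
  ∑ i : m, if 0 < hA.eigenvalues i then
    Matrix.vecMulVec (fun j => hA.eigenvectorBasis i j) (star fun j => hA.eigenvectorBasis i j)
  else 0

/-- Orthogonal projection onto the nonnegative eigenspace of a Hermitian matrix. -/
noncomputable def projNonneg {m : Type*} [Fintype m] [DecidableEq m]
    (A : Matrix m m ℂ) (hA : A.IsHermitian) : Matrix m m ℂ :=
  ∑ i : m, if 0 ≤ hA.eigenvalues i then
    Matrix.vecMulVec (fun j => hA.eigenvectorBasis i j) (star fun j => hA.eigenvectorBasis i j)
  else 0

/-- Orthogonal projection onto the nonpositive eigenspace of a Hermitian matrix. -/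
noncomputable def projNonpos {m : Type*} [Fintype m] [DecidableEq m]
    (A : Matrix m m ℂ) (hA : A.IsHermitian) : Matrix m m ℂ :=
  ∑ i : m, if hA.eigenvalues i ≤ 0 then
    Matrix.vecMulVec (fun j => hA.eigenvectorBasis i j) (star fun j => hA.eigenvectorBasis i j)
  else 0


/-! Write `Δ = ρ₀ - t ρ₁` and `P = {Δ > 0}`. In an eigenbasis of `Δ`, `tr (Δ T) = ∑ λᵢ Tᵢᵢ` with
`0 ≤ Tᵢᵢ ≤ 1`, so each term is at most `max λᵢ 0` and `tr (Δ T) ≤ tr (Δ P)`. Expanding `Δ` and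
using `tr (ρ₀ P) = 1 - tr (ρ₀ {Δ ≤ 0})` turns this into the claim. -/

open Matrix

lemma Matrix.trace_mul_diagonal_mul_mul {m R : Type*} [Fintype m] [DecidableEq m] [CommSemiring R]
    (U V M : Matrix m m R) (d : m → R) :
    (U * diagonal d * V * M).trace = ∑ i, d i * (V * M * U) i i := by
  rw [show U * diagonal d * V * M = U * (diagonal d * (V * M)) by simp only [Matrix.mul_assoc],
    trace_mul_comm, Matrix.mul_assoc]
  simp [trace, diagonal_mul]

lemma Complex.ofReal_mul_le_mul_ite_pos {x : ℝ} {b : ℂ} (h0 : 0 ≤ b) (h1 : b ≤ 1) :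
    (x : ℂ) * b ≤ x * if 0 < x then 1 else 0 := by
  split_ifs with hx
  · exact mul_le_mul_of_nonneg_left h1 (by exact_mod_cast hx.le)
  · rw [mul_zero]
    exact mul_nonpos_of_nonpos_of_nonneg (by exact_mod_cast not_lt.mp hx) h0

namespace Matrix.IsHermitian

variable {m : Type*} [Fintype m] [DecidableEq m] {A : Matrix m m ℂ} (hA : A.IsHermitian)

lemma sum_ite_vecMulVec_eigenvectorBasis (p : ℝ → Prop) [DecidablePred p] :
    (∑ i, if p (hA.eigenvalues i) then
      vecMulVec (fun j => hA.eigenvectorBasis i j) (star fun j => hA.eigenvectorBasis i j) else 0)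
    = (hA.eigenvectorUnitary : Matrix m m ℂ)
      * diagonal (fun i => if p (hA.eigenvalues i) then 1 else 0)
      * star (hA.eigenvectorUnitary : Matrix m m ℂ) := by
  ext j k
  simp only [Matrix.sum_apply, mul_apply, diagonal_apply, star_apply, mul_ite, mul_one, mul_zero,
    ite_mul, zero_mul, Finset.sum_ite_eq', Finset.mem_univ, if_true]
  refine Finset.sum_congr rfl fun i _ => ?_
  split_ifs <;> simp [vecMulVec_apply]

lemma projPos_eq :
    projPos A hA = (hA.eigenvectorUnitary : Matrix m m ℂ)
      * diagonal (fun i => if 0 < hA.eigenvalues i then 1 else 0)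
      * star (hA.eigenvectorUnitary : Matrix m m ℂ) :=
  hA.sum_ite_vecMulVec_eigenvectorBasis (0 < ·)

lemma projNonpos_eq :
    projNonpos A hA = (hA.eigenvectorUnitary : Matrix m m ℂ)
      * diagonal (fun i => if hA.eigenvalues i ≤ 0 then 1 else 0)
      * star (hA.eigenvectorUnitary : Matrix m m ℂ) :=
  hA.sum_ite_vecMulVec_eigenvectorBasis (· ≤ 0)

lemma projPos_add_projNonpos : projPos A hA + projNonpos A hA = 1 := by
  have hsum : (fun i => (if 0 < hA.eigenvalues i then 1 else 0)
      + if hA.eigenvalues i ≤ 0 then 1 else 0 : m → ℂ) = 1 := by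
    ext i
    rcases lt_or_ge 0 (hA.eigenvalues i) with h | h
    · simp [h, not_le.mpr h]
    · simp [h, not_lt.mpr h]
  rw [projPos_eq, projNonpos_eq, ← add_mul, ← mul_add, diagonal_add, hsum, Pi.one_def,
    diagonal_one, mul_one, ← Unitary.coe_star, Unitary.coe_mul_star_self]

lemma trace_mul_le_trace_mul_projPos {T : Matrix m m ℂ} (hT0 : T.PosSemidef)
    (hT1 : (1 - T).PosSemidef) : (A * T).trace ≤ (A * projPos A hA).trace := by
  set U := (hA.eigenvectorUnitary : Matrix m m ℂ)
  have hUU : star U * U = 1 := Unitary.coe_star_mul_self _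
  have htrace (M : Matrix m m ℂ) :
      (A * M).trace = ∑ i, (hA.eigenvalues i : ℂ) * (star U * M * U) i i := by
    conv_lhs => rw [hA.spectral_theorem, Unitary.conjStarAlgAut_apply]
    exact trace_mul_diagonal_mul_mul ..
  have hP : star U * projPos A hA * U =
      diagonal fun i => if 0 < hA.eigenvalues i then 1 else 0 := by
    rw [hA.projPos_eq]
    simp only [Matrix.mul_assoc]
    rw [hUU, Matrix.mul_one, ← Matrix.mul_assoc, hUU, Matrix.one_mul]
  rw [htrace, htrace, hP]
  refine Finset.sum_le_sum fun i _ => ?_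
  have h0 : 0 ≤ (star U * T * U) i i := (hT0.conjTranspose_mul_mul_same U).diag_nonneg
  have h1 : (star U * T * U) i i ≤ 1 := by
    have := (hT1.conjTranspose_mul_mul_same U).diag_nonneg (i := i)
    rwa [Matrix.mul_sub, Matrix.sub_mul, Matrix.mul_one, ← star_eq_conjTranspose, hUU, sub_apply,
      one_apply_eq, sub_nonneg] at this
  simpa only [diagonal_apply_eq] using Complex.ofReal_mul_le_mul_ite_pos h0 h1

end Matrix.IsHermitian

theorem np_lower_bound_general {n : ℕ} (ρ₀ ρ₁ T : Matrix (Fin n) (Fin n) ℂ)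
    (hρ₀tr : ρ₀.trace = 1)
    (t : ℝ)
    (hT0 : T.PosSemidef)
    (hT1 : ((1 : Matrix (Fin n) (Fin n) ℂ) - T).PosSemidef)
    (hH : (ρ₀ - (t : ℂ) • ρ₁).IsHermitian) :
    (ρ₀ * projNonpos (ρ₀ - (t : ℂ) • ρ₁) hH).trace
      + (t : ℂ) * ((ρ₁ * projPos (ρ₀ - (t : ℂ) • ρ₁) hH).trace - (ρ₁ * T).trace)
    ≤ 1 - (ρ₀ * T).trace := by
  have key := hH.trace_mul_le_trace_mul_projPos hT0 hT1
  simp only [sub_mul, smul_mul, trace_sub, trace_smul, smul_eq_mul] at key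
  have hcompl : (ρ₀ * projPos _ hH).trace + (ρ₀ * projNonpos _ hH).trace = 1 := by
    rw [← trace_add, ← mul_add, hH.projPos_add_projNonpos, mul_one, hρ₀tr]
  linear_combination key + hcompl

/-- Quantum Neyman–Pearson lower bound (eqn. NPbound-3): for density matrices `ρ₀, ρ₁`,
`t ≥ 0` and any test `0 ≤ T ≤ I`,
`1 − tr(ρ₀ T) ≥ tr(ρ₀ {ρ₀ − tρ₁ ≤ 0}) + t (tr(ρ₁ {ρ₀ − tρ₁ > 0}) − tr(ρ₁ T))`. -/
theorem np_lower_bound {n : ℕ} (ρ₀ ρ₁ T : Matrix (Fin n) (Fin n) ℂ)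
    (hρ₀ : ρ₀.PosSemidef) (hρ₀tr : ρ₀.trace = 1)
    (hρ₁ : ρ₁.PosSemidef) (hρ₁tr : ρ₁.trace = 1)
    (t : ℝ) (ht : 0 ≤ t)
    (hT : T.IsHermitian) (hT0 : T.PosSemidef)
    (hT1 : ((1 : Matrix (Fin n) (Fin n) ℂ) - T).PosSemidef)
    (hH : (ρ₀ - (t : ℂ) • ρ₁).IsHermitian) :
    (ρ₀ * projNonpos (ρ₀ - (t : ℂ) • ρ₁) hH).trace
      + (t : ℂ) * ((ρ₁ * projPos (ρ₀ - (t : ℂ) • ρ₁) hH).trace - (ρ₁ * T).trace)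
    ≤ 1 - (ρ₀ * T).trace :=
  np_lower_bound_general ρ₀ ρ₁ T hρ₀tr t hT0 hT1 hH
end

section
/- Let ρ₀, ρ₁ be density matrices, t ≥ 0, β ∈ [0,1], and let T be any Hermitian test with 0 ≤ T ≤ I and tr(ρ₁ T) ≤ β. Then the type-I error 1 − tr(ρ₀ T) satisfies 1 − tr(ρ₀ T) ≥ tr(ρ₀ · {ρ₀ − t ρ₁ ≤ 0}) − t β. -/
open ComplexOrder

/-!
Write `A = ρ₀ - t ρ₁` and `P = {A ≤ 0}`. In an orthonormal eigenbasis `(vᵢ)` of `A`,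
`tr (A S) = ∑ λᵢ ⟪vᵢ, S vᵢ⟫` with `⟪vᵢ, S vᵢ⟫ ∈ [0, 1]` whenever `0 ≤ S ≤ 1`, while `tr (A P)`
keeps exactly the terms with `λᵢ ≤ 0` at weight one; hence `tr (A P) ≤ tr (A (1 - T))`.
Moreover `tr (ρ₁ P) ≤ tr ρ₁ = 1 ≤ tr (ρ₁ (1 - T)) + β`. Adding `t` times the second inequality
to the first and using `ρ₀ = A + t ρ₁` gives the bound.
-/

open Matrix

lemma OrthonormalBasis.star_dotProduct_self {𝕜 ι m : Type*} [RCLike 𝕜] [Fintype ι] [Fintype m]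
    (b : OrthonormalBasis ι 𝕜 (EuclideanSpace 𝕜 m)) (i : ι) : star ⇑(b i) ⬝ᵥ ⇑(b i) = 1 := by
  rw [dotProduct_comm, ← EuclideanSpace.inner_eq_star_dotProduct, inner_self_eq_norm_sq_to_K,
    b.orthonormal.1 i]
  simp

namespace Matrix

variable {m : Type*} [Fintype m]

lemma trace_mul_vecMulVec {R : Type*} [CommSemiring R] (M : Matrix m m R) (a b : m → R) :
    (M * vecMulVec a b).trace = b ⬝ᵥ (M *ᵥ a) := by
  rw [mul_vecMulVec, trace_vecMulVec, dotProduct_comm]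

lemma trace_eq_sum_star_dotProduct_mulVec {𝕜 ι : Type*} [RCLike 𝕜] [DecidableEq m] [Fintype ι]
    (b : OrthonormalBasis ι 𝕜 (EuclideanSpace 𝕜 m)) (M : Matrix m m 𝕜) :
    M.trace = ∑ i, star ⇑(b i) ⬝ᵥ (M *ᵥ ⇑(b i)) := by
  rw [← trace_toLin_eq M (PiLp.basisFun 2 𝕜 m), ← toLpLin_eq_toLin,
    LinearMap.trace_eq_sum_inner _ b]
  simp [EuclideanSpace.inner_eq_star_dotProduct, toLpLin_apply, dotProduct_comm]

namespace IsHermitian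

variable [DecidableEq m] {A : Matrix m m ℂ} (hA : A.IsHermitian)

lemma star_eigenvectorBasis_dotProduct_mulVec (i : m) :
    star ⇑(hA.eigenvectorBasis i) ⬝ᵥ (A *ᵥ ⇑(hA.eigenvectorBasis i)) = hA.eigenvalues i := by
  rw [hA.mulVec_eigenvectorBasis, dotProduct_smul, hA.eigenvectorBasis.star_dotProduct_self,
    Complex.real_smul, mul_one]

lemma trace_mul_eq_sum_eigenvalues_mul (S : Matrix m m ℂ) :
    (A * S).trace = ∑ i, hA.eigenvalues i *
      (star ⇑(hA.eigenvectorBasis i) ⬝ᵥ (S *ᵥ ⇑(hA.eigenvectorBasis i))) := by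
  rw [trace_mul_comm, trace_eq_sum_star_dotProduct_mulVec hA.eigenvectorBasis]
  refine Finset.sum_congr rfl fun i _ => ?_
  rw [← mulVec_mulVec, hA.mulVec_eigenvectorBasis, mulVec_smul, dotProduct_smul,
    Complex.real_smul]

lemma trace_mul_projNonpos (M : Matrix m m ℂ) :
    (M * projNonpos A hA).trace = ∑ i, if hA.eigenvalues i ≤ 0 then
      star ⇑(hA.eigenvectorBasis i) ⬝ᵥ (M *ᵥ ⇑(hA.eigenvectorBasis i)) else 0 := by
  rw [projNonpos, Finset.mul_sum, trace_sum]
  refine Finset.sum_congr rfl fun i _ => ?_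
  split_ifs
  · exact trace_mul_vecMulVec M _ _
  · simp

lemma trace_mul_projNonpos_le_trace {M : Matrix m m ℂ} (hM : M.PosSemidef) :
    (M * projNonpos A hA).trace ≤ M.trace := by
  rw [hA.trace_mul_projNonpos, trace_eq_sum_star_dotProduct_mulVec hA.eigenvectorBasis M]
  refine Finset.sum_le_sum fun i _ => ?_
  split_ifs
  · exact le_rfl
  · exact hM.dotProduct_mulVec_nonneg _

lemma trace_mul_projNonpos_le_trace_mul {S : Matrix m m ℂ} (hS : S.PosSemidef)
    (hS1 : (1 - S).PosSemidef) : (A * projNonpos A hA).trace ≤ (A * S).trace := by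
  rw [hA.trace_mul_projNonpos, hA.trace_mul_eq_sum_eigenvalues_mul S]
  refine Finset.sum_le_sum fun i _ => ?_
  set v := hA.eigenvectorBasis i
  have hle_one : star ⇑v ⬝ᵥ (S *ᵥ ⇑v) ≤ 1 := by
    have := hS1.dotProduct_mulVec_nonneg ⇑v
    rwa [sub_mulVec, one_mulVec, dotProduct_sub, hA.eigenvectorBasis.star_dotProduct_self,
      sub_nonneg] at this
  split_ifs with hneg
  · rw [hA.star_eigenvectorBasis_dotProduct_mulVec]
    simpa using mul_le_mul_of_nonpos_left hle_one (by exact_mod_cast hneg)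
  · exact mul_nonneg (by exact_mod_cast (not_le.mp hneg).le) (hS.dotProduct_mulVec_nonneg _)

end IsHermitian

end Matrix

theorem np_relaxed_lower_bound_general {n : ℕ} (ρ₀ ρ₁ T : Matrix (Fin n) (Fin n) ℂ)
    (hρ₀tr : ρ₀.trace = 1)
    (hρ₁ : ρ₁.PosSemidef) (hρ₁tr : ρ₁.trace = 1)
    (t β : ℝ) (ht : 0 ≤ t)
    (hT0 : T.PosSemidef)
    (hT1 : ((1 : Matrix (Fin n) (Fin n) ℂ) - T).PosSemidef)
    (hTβ : (ρ₁ * T).trace ≤ (β : ℂ))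
    (hH : (ρ₀ - (t : ℂ) • ρ₁).IsHermitian) :
    (ρ₀ * projNonpos (ρ₀ - (t : ℂ) • ρ₁) hH).trace - (t : ℂ) * (β : ℂ)
      ≤ 1 - (ρ₀ * T).trace := by
  set A := ρ₀ - (t : ℂ) • ρ₁
  set P := projNonpos A hH
  have hsplit (M : Matrix (Fin n) (Fin n) ℂ) :
      (ρ₀ * M).trace = (A * M).trace + t * (ρ₁ * M).trace := by
    rw [sub_mul, smul_mul_assoc, trace_sub, trace_smul, smul_eq_mul, sub_add_cancel]
  have hAP : (A * P).trace ≤ (A * (1 - T)).trace :=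
    hH.trace_mul_projNonpos_le_trace_mul hT1 (by rwa [sub_sub_cancel])
  have hρ₁P : (ρ₁ * P).trace - β ≤ (ρ₁ * (1 - T)).trace := by
    rw [mul_sub, mul_one, trace_sub, hρ₁tr]
    exact sub_le_sub (hρ₁tr ▸ hH.trace_mul_projNonpos_le_trace hρ₁) hTβ
  calc (ρ₀ * P).trace - t * β = (A * P).trace + t * ((ρ₁ * P).trace - β) := by
        rw [hsplit]; ring
    _ ≤ (A * (1 - T)).trace + t * (ρ₁ * (1 - T)).trace :=
        add_le_add hAP (mul_le_mul_of_nonneg_left hρ₁P (by exact_mod_cast ht))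
    _ = 1 - (ρ₀ * T).trace := by rw [← hsplit, mul_sub, mul_one, trace_sub, hρ₀tr]

/-- Meta-converse relaxation (eqn. NPcorollary-2): for density matrices `ρ₀, ρ₁`, `t ≥ 0`,
`β ∈ [0,1]` and any test `0 ≤ T ≤ I` with `tr(ρ₁ T) ≤ β`,
`1 − tr(ρ₀ T) ≥ tr(ρ₀ {ρ₀ − tρ₁ ≤ 0}) − tβ`. -/
theorem np_relaxed_lower_bound {n : ℕ} (ρ₀ ρ₁ T : Matrix (Fin n) (Fin n) ℂ)
    (hρ₀ : ρ₀.PosSemidef) (hρ₀tr : ρ₀.trace = 1)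
    (hρ₁ : ρ₁.PosSemidef) (hρ₁tr : ρ₁.trace = 1)
    (t β : ℝ) (ht : 0 ≤ t) (hβ0 : 0 ≤ β) (hβ1 : β ≤ 1)
    (hT : T.IsHermitian) (hT0 : T.PosSemidef)
    (hT1 : ((1 : Matrix (Fin n) (Fin n) ℂ) - T).PosSemidef)
    (hTβ : (ρ₁ * T).trace ≤ (β : ℂ))
    (hH : (ρ₀ - (t : ℂ) • ρ₁).IsHermitian) :
    (ρ₀ * projNonpos (ρ₀ - (t : ℂ) • ρ₁) hH).trace - (t : ℂ) * (β : ℂ)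
      ≤ 1 - (ρ₀ * T).trace :=
  np_relaxed_lower_bound_general ρ₀ ρ₁ T hρ₀tr hρ₁ hρ₁tr t β ht hT0 hT1 hTβ hH
end

section
/- Suppose a POVM {Π₁*,…,Π_M*} satisfies the Holevo–Yuen–Kennedy–Lax conditions for states τ₁,…,τ_M with priors p₁,…,p_M: with Λ = Σᵢ pᵢ τᵢ Πᵢ* Hermitian, (Λ − p_m τ_m)Π_m* = 0 = Π_m*(Λ − p_m τ_m) and Λ − p_m τ_m ≥ 0 for all m. Then for any other POVM {Π₁,…,Π_M}, Σ_m p_m tr(τ_m Π_m*) ≥ Σ_m p_m tr(τ_m Π_m). -/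
/-!
`tr Λ = ∑ₘ pₘ tr (τₘ Πₘ*)` is the success probability of `Π*`. For any POVM `Π`,
`tr Λ - ∑ₘ pₘ tr (τₘ Πₘ) = ∑ₘ tr ((Λ - pₘ τₘ) Πₘ)` because `∑ₘ Πₘ = 1`, and each summand
is nonnegative as the trace of a product of two positive semidefinite matrices.
-/

open ComplexOrder

namespace Matrix

variable {n 𝕜 : Type*} [Fintype n] [RCLike 𝕜]

theorem PosSemidef.trace_mul_nonneg {A B : Matrix n n 𝕜} (hA : A.PosSemidef)
    (hB : B.PosSemidef) : 0 ≤ (A * B).trace := by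
  classical
  open scoped MatrixOrder in
  obtain ⟨C, rfl⟩ := CStarAlgebra.nonneg_iff_eq_star_mul_self.mp hA.nonneg
  rw [star_eq_conjTranspose, Matrix.mul_assoc, trace_mul_comm]
  exact (hB.mul_mul_conjTranspose_same C).trace_nonneg

theorem sum_trace_mul_le_trace_of_posSemidef_sub [DecidableEq n] {ι : Type*} [Fintype ι]
    {Λ : Matrix n n 𝕜} {A P : ι → Matrix n n 𝕜} (hA : ∀ i, (Λ - A i).PosSemidef)
    (hP : ∀ i, (P i).PosSemidef) (hPsum : ∑ i, P i = 1) : ∑ i, (A i * P i).trace ≤ Λ.trace := by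
  have hgap : Λ.trace - ∑ i, (A i * P i).trace = ∑ i, ((Λ - A i) * P i).trace := by
    simp only [Matrix.sub_mul, trace_sub, Finset.sum_sub_distrib, ← trace_sum,
      ← Finset.mul_sum, hPsum, mul_one]
  exact sub_nonneg.mp (hgap ▸ Finset.sum_nonneg fun i _ ↦ (hA i).trace_mul_nonneg (hP i))

end Matrix

theorem hykl_sufficiency_general {n M : ℕ}
    (τ : Fin M → Matrix (Fin n) (Fin n) ℂ)
    (p : Fin M → ℝ)
    (Ps : Fin M → Matrix (Fin n) (Fin n) ℂ)
    (Λ : Matrix (Fin n) (Fin n) ℂ)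
    (hΛdef : Λ = ∑ i, (p i : ℂ) • (τ i * Ps i))
    (hpos : ∀ m, (Λ - (p m : ℂ) • τ m).PosSemidef)
    (Pov : Fin M → Matrix (Fin n) (Fin n) ℂ)
    (hPov : ∀ i, (Pov i).PosSemidef)
    (hPovsum : ∑ i, Pov i = 1) :
    ∑ m, (p m : ℂ) * (τ m * Pov m).trace ≤ ∑ m, (p m : ℂ) * (τ m * Ps m).trace := by
  have hweight : ∀ m Q, (p m : ℂ) * (τ m * Q).trace = ((p m : ℂ) • τ m * Q).trace := by
    simp [Matrix.trace_smul]
  have htrace : ∑ m, (p m : ℂ) * (τ m * Ps m).trace = Λ.trace := by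
    simp [hΛdef, Matrix.trace_sum, Matrix.trace_smul]
  simp only [hweight] at htrace ⊢
  rw [htrace]
  exact Matrix.sum_trace_mul_le_trace_of_posSemidef_sub hpos hPov hPovsum

/-- Sufficiency of the Holevo–Yuen–Kennedy–Lax conditions: a POVM satisfying them
achieves the maximal success probability among all POVMs. -/
theorem hykl_sufficiency {n M : ℕ}
    (τ : Fin M → Matrix (Fin n) (Fin n) ℂ)
    (hτ : ∀ i, (τ i).PosSemidef ∧ (τ i).trace = 1)
    (p : Fin M → ℝ) (hp : ∀ i, 0 ≤ p i) (hpsum : ∑ i, p i = 1)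
    (Ps : Fin M → Matrix (Fin n) (Fin n) ℂ)
    (hPs : ∀ i, (Ps i).PosSemidef)
    (hPssum : ∑ i, Ps i = 1)
    (Λ : Matrix (Fin n) (Fin n) ℂ)
    (hΛdef : Λ = ∑ i, (p i : ℂ) • (τ i * Ps i))
    (hΛherm : Λ.IsHermitian)
    (hstat1 : ∀ m, (Λ - (p m : ℂ) • τ m) * Ps m = 0)
    (hstat2 : ∀ m, Ps m * (Λ - (p m : ℂ) • τ m) = 0)
    (hpos : ∀ m, (Λ - (p m : ℂ) • τ m).PosSemidef)
    (Pov : Fin M → Matrix (Fin n) (Fin n) ℂ)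
    (hPov : ∀ i, (Pov i).PosSemidef)
    (hPovsum : ∑ i, Pov i = 1) :
    ∑ m, (p m : ℂ) * (τ m * Pov m).trace ≤ ∑ m, (p m : ℂ) * (τ m * Ps m).trace :=
  hykl_sufficiency_general τ p Ps Λ hΛdef hpos Pov hPov hPovsum
end

section
/- Let |φ₁⟩,…,|φ_M⟩ be unit vectors in ℂⁿ such that Σ_m |φ_m⟩⟨φ_m| = (M/n) I. Then the POVM Π_m = (n/M)|φ_m⟩⟨φ_m| satisfies the Holevo–Yuen–Kennedy–Lax optimality conditions for discriminating the equiprobable states W_m = |φ_m⟩⟨φ_m|, and the minimum error probability equals 1 − n/M. -/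
/-!
The frame condition makes `Π_m = (n/M) W_m` a POVM, and since each `W_m` is a rank-one
projection, `W_m Π_m = Π_m`; hence `Λ = (1/M) Σ Π_m = I/M` and `Λ - W_m/M = (I - W_m)/M`, a
positive multiple of a projection. For any POVM `Q`, positivity of `tr((I - W_m) Q_m)` gives
`tr(W_m Q_m) ≤ tr Q_m`, and summing bounds the success probability by `tr I / M = n/M`, which the
square-root measurement attains.
-/

open ComplexOrder Matrix

variable {𝕜 : Type*} [RCLike 𝕜] {ι : Type*} [Fintype ι]

lemma Matrix.isStarProjection_vecMulVec_star {v : ι → 𝕜} (hv : ∑ i, v i * star (v i) = 1) :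
    IsStarProjection (vecMulVec v (star v)) where
  isIdempotentElem := by
    have hdot : star v ⬝ᵥ v = 1 := by
      simpa only [dotProduct, Pi.star_apply, mul_comm] using hv
    rw [IsIdempotentElem, vecMulVec_mul_vecMulVec, hdot, one_smul]
  isSelfAdjoint := (posSemidef_vecMulVec_self_star v).isHermitian

open scoped MatrixOrder in
lemma Matrix.PosSemidef.trace_mul_nonneg_s10 [DecidableEq ι] {A B : Matrix ι ι 𝕜} (hA : A.PosSemidef)
    (hB : B.PosSemidef) : 0 ≤ (A * B).trace := by
  set S := CFC.sqrt A
  have hS : Sᴴ = S := (CFC.sqrt_nonneg A).posSemidef.isHermitian.eq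
  calc 0 ≤ (S * B * Sᴴ).trace := (hB.mul_mul_conjTranspose_same S).trace_nonneg
    _ = (A * B).trace := by
      rw [hS, trace_mul_comm, ← mul_assoc, CFC.sqrt_mul_sqrt_self A hA.nonneg]

open scoped MatrixOrder in
lemma IsStarProjection.posSemidef_one_sub [DecidableEq ι] {P : Matrix ι ι 𝕜}
    (hP : IsStarProjection P) : (1 - P).PosSemidef :=
  hP.one_sub_nonneg.posSemidef

lemma IsStarProjection.trace_mul_le_trace [DecidableEq ι] {P Q : Matrix ι ι 𝕜}
    (hP : IsStarProjection P) (hQ : Q.PosSemidef) : (P * Q).trace ≤ Q.trace := by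
  have := hP.posSemidef_one_sub.trace_mul_nonneg_s10 hQ
  rwa [sub_mul, one_mul, trace_sub, sub_nonneg] at this

section POVM

variable {κ : Type*} [Fintype κ] [DecidableEq ι] {Q : κ → Matrix ι ι 𝕜}

lemma Matrix.sum_mul_trace_of_sum_eq_one (hQ : ∑ m, Q m = 1) (c : 𝕜) :
    ∑ m, c * (Q m).trace = c * Fintype.card ι := by
  rw [← Finset.mul_sum, ← trace_sum, hQ, trace_one]

lemma Matrix.sum_mul_trace_mul_le_of_isStarProjection {W : κ → Matrix ι ι 𝕜}
    (hW : ∀ m, IsStarProjection (W m)) (hQpsd : ∀ m, (Q m).PosSemidef) (hQ : ∑ m, Q m = 1)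
    {c : 𝕜} (hc : 0 ≤ c) : ∑ m, c * (W m * Q m).trace ≤ c * Fintype.card ι := by
  rw [← sum_mul_trace_of_sum_eq_one hQ c]
  exact Finset.sum_le_sum fun m _ ↦
    mul_le_mul_of_nonneg_left ((hW m).trace_mul_le_trace (hQpsd m)) hc

end POVM

/-- If unit vectors `φ₁,…,φ_M` in `ℂⁿ` satisfy `Σ |φ_m⟩⟨φ_m| = (M/n) I`, then the
POVM `Π_m = (n/M)|φ_m⟩⟨φ_m|` satisfies the Holevo–Yuen–Kennedy–Lax conditions for
discriminating the equiprobable states `W_m = |φ_m⟩⟨φ_m|`, and the minimum error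
probability equals `1 − n/M`. -/
theorem sqrt_measurement_optimal {n M : ℕ} (hn : 0 < n) (hM : n ≤ M)
    (φ : Fin M → (Fin n → ℂ))
    (hunit : ∀ m, ∑ i, φ m i * star (φ m i) = 1)
    (hres : ∑ m, Matrix.vecMulVec (φ m) (star (φ m))
      = ((M : ℂ) / (n : ℂ)) • (1 : Matrix (Fin n) (Fin n) ℂ))
    (W Pov : Fin M → Matrix (Fin n) (Fin n) ℂ)
    (hWdef : ∀ m, W m = Matrix.vecMulVec (φ m) (star (φ m)))
    (hPovdef : ∀ m, Pov m = ((n : ℂ) / (M : ℂ)) • Matrix.vecMulVec (φ m) (star (φ m)))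
    (Λ : Matrix (Fin n) (Fin n) ℂ)
    (hΛdef : Λ = ∑ m, (1 / (M : ℂ)) • (W m * Pov m)) :
    (∀ m, (Pov m).PosSemidef) ∧
    (∑ m, Pov m = 1) ∧
    Λ.IsHermitian ∧
    (∀ m, (Λ - (1 / (M : ℂ)) • W m) * Pov m = 0) ∧
    (∀ m, (Λ - (1 / (M : ℂ)) • W m).PosSemidef) ∧
    IsLeast {e : ℂ | ∃ Q : Fin M → Matrix (Fin n) (Fin n) ℂ,
        (∀ i, (Q i).PosSemidef) ∧ (∑ i, Q i = 1) ∧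
        e = 1 - ∑ m, (1 / (M : ℂ)) * (W m * Q m).trace}
      (1 - (n : ℂ) / (M : ℂ)) := by
  have hn0 : (n : ℂ) ≠ 0 := Nat.cast_ne_zero.mpr hn.ne'
  have hM0 : (M : ℂ) ≠ 0 := Nat.cast_ne_zero.mpr (hn.trans_le hM).ne'
  have hinv : (0 : ℂ) ≤ 1 / M := by positivity
  have hproj m : IsStarProjection (W m) := hWdef m ▸ isStarProjection_vecMulVec_star (hunit m)
  have hPov m : Pov m = ((n : ℂ) / M) • W m := by rw [hPovdef, hWdef]
  have hPovPsd m : (Pov m).PosSemidef :=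
    hPovdef m ▸ (posSemidef_vecMulVec_self_star (φ m)).smul (by positivity)
  have hPovSum : ∑ m, Pov m = 1 := by
    simp_rw [hPovdef, ← Finset.smul_sum, hres, smul_smul]
    rw [div_mul_div_cancel₀ hM0, div_self hn0, one_smul]
  have hWPov m : W m * Pov m = Pov m := by rw [hPov, mul_smul_comm, (hproj m).isIdempotentElem]
  have hΛ : Λ = (1 / (M : ℂ)) • 1 := by simp_rw [hΛdef, hWPov, ← Finset.smul_sum, hPovSum]
  have hΛW m : Λ - (1 / (M : ℂ)) • W m = (1 / (M : ℂ)) • (1 - W m) := by rw [hΛ, smul_sub]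
  refine ⟨hPovPsd, hPovSum, ?_, fun m ↦ ?_, fun m ↦ ?_, ⟨Pov, hPovPsd, hPovSum, ?_⟩, ?_⟩
  · exact hΛ ▸ (PosSemidef.one.smul hinv).isHermitian
  · rw [hΛW, smul_mul_assoc, sub_mul, one_mul, hWPov, sub_self, smul_zero]
  · exact hΛW m ▸ (hproj m).posSemidef_one_sub.smul hinv
  · simp_rw [hWPov, sum_mul_trace_of_sum_eq_one hPovSum, Fintype.card_fin]
    ring
  · rintro e ⟨Q, hQpsd, hQsum, rfl⟩
    have := sum_mul_trace_mul_le_of_isStarProjection hproj hQpsd hQsum hinv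
    rw [Fintype.card_fin, one_div_mul_eq_div] at this
    exact sub_le_sub_left this 1
end
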